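/- arXiv:2201.08963 — 2 statements merged into one kernel-verified Lean document; each statement's English description precedes it below -/
import Mathlib

section
/- A causal-net G is a causal-Tree if and only if there is a finite (possibly empty) sequence of simple contractions λᵢ : G_{i-1} → Gᵢ (1 ≤ i ≤ n) with G₀ = G and Gₙ a point, such that for each i the set of edges of G mapped by the composite λ_{i-1} ∘ ⋯ ∘ λ₁ onto edges of the multi-edge contracted by λᵢ is itself a multi-edge of G. -/
/-!
Along a sequence of primitive simple contractions `G → K`, follow the undirected graph of the
edges of `G` contracted so far. Primitivity says that each step contracts exactly the edges of `G`
between two vertices `a`, `b` whose images so far are distinct, so `a` and `b` lie in different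
components and the contracted graph stays a forest whose components are the fibers. When `K` is a
point every edge is contracted and this forest is connected, so `G` is a causal-Tree.

Conversely, a causal-Tree with at least two vertices has a leaf `v`. By acyclicity all edges at `v`
run in the same direction between `v` and its neighbour, and contracting them is a primitive simple
contraction onto the causal-Tree `G - v`, to which induction applies. This contraction is injective
on the remaining edges, so the primitivity conditions of the later steps pull back to `G`.
-/

open CategoryTheory

namespace CausalNets

/-- Acyclicity condition for raw directed-multigraph data: every directed cycle
has length zero. -/
def NoCycleData (V E : Type) (s t : E → V) : Prop :=
  letI : Quiver V := ⟨fun a b => { e : E // s e = a ∧ t e = b }⟩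
  ∀ (v : V) (p : Quiver.Path v v), p.length = 0

/-- A causal-net: a finite acyclic directed multigraph (isolated vertices and
parallel edges allowed). -/
structure CausalNet where
  V : Type
  E : Type
  src : E → V
  tgt : E → V
  fintypeV : Fintype V
  fintypeE : Fintype E
  acyclic : NoCycleData V E src tgt

attribute [instance] CausalNet.fintypeV CausalNet.fintypeE

instance CausalNet.quiver (G : CausalNet) : Quiver G.V :=
  ⟨fun a b => { e : G.E // G.src e = a ∧ G.tgt e = b }⟩

/-- The category `Cau` of causal-nets: a morphism `G ⟶ H` is a functor between
the path categories `Paths G.V ⥤ Paths H.V`. -/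
instance : Category CausalNet where
  Hom G H := Paths G.V ⥤ Paths H.V
  id G := 𝟭 (Paths G.V)
  comp φ ψ := φ ⋙ ψ

variable {G H K : CausalNet}

/-- The action of a morphism of causal-nets on vertices (objects). -/
def vmap (φ : G ⟶ H) : G.V → H.V := (φ : Paths G.V ⥤ Paths H.V).obj

/-- The action of a morphism of causal-nets on directed paths (morphisms). -/
def pmap (φ : G ⟶ H) {a b : G.V} (p : Quiver.Path a b) :
    Quiver.Path (vmap φ a) (vmap φ b) :=
  (φ : Paths G.V ⥤ Paths H.V).map p

/-- The quiver arrow corresponding to an edge. -/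
def edgeHom (G : CausalNet) (e : G.E) : G.src e ⟶ G.tgt e := ⟨e, rfl, rfl⟩

/-- The directed path which is the image of the edge `e` under the morphism `φ`. -/
def edgePath (φ : G ⟶ H) (e : G.E) :
    Quiver.Path (vmap φ (G.src e)) (vmap φ (G.tgt e)) :=
  pmap φ (Quiver.Hom.toPath (edgeHom G e))

/-- The underlying edge of a quiver arrow. -/
def homEdge {a b : G.V} (f : a ⟶ b) : G.E := Subtype.val f

/-- The list of edges traversed by a directed path. -/
def pathEdges : {a b : G.V} → Quiver.Path a b → List G.E
  | _, _, Quiver.Path.nil => []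
  | _, _, Quiver.Path.cons p f => pathEdges p ++ [homEdge f]

/-- The list of vertices visited by a directed path (including endpoints). -/
def pathVertices : {a b : G.V} → Quiver.Path a b → List G.V
  | a, _, Quiver.Path.nil => [a]
  | _, b, Quiver.Path.cons p _ => pathVertices p ++ [b]

/-- An edge `e` is a contraction of `φ` if `φ(e)` has length `0`. -/
def IsContractionEdge (φ : G ⟶ H) (e : G.E) : Prop := (edgePath φ e).length = 0

/-- An edge `e` is a segment of `φ` if `φ(e)` has length `1`. -/
def IsSegmentEdge (φ : G ⟶ H) (e : G.E) : Prop := (edgePath φ e).length = 1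

/-- An edge `e` is a subdivision of `φ` if `φ(e)` has length at least `2`. -/
def IsSubdivisionEdge (φ : G ⟶ H) (e : G.E) : Prop := 2 ≤ (edgePath φ e).length

/-- `φ` maps the edge `e` to the length-one path consisting of the edge `h`. -/
def MapsToEdge (φ : G ⟶ H) (e : G.E) (h : H.E) : Prop :=
  pathEdges (edgePath φ e) = [h]

/-- A quotient: a morphism with no null-vertex and no null-edge. -/
def IsQuotientMor (φ : G ⟶ H) : Prop :=
  (∀ v : H.V, ∃ w : G.V, vmap φ w = v) ∧ ∀ h : H.E, ∃ e : G.E, MapsToEdge φ e h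

/-- A coarse-graining: a quotient with no subdivision. -/
def IsCoarseGraining (φ : G ⟶ H) : Prop :=
  IsQuotientMor φ ∧ ∀ e : G.E, ¬ IsSubdivisionEdge φ e

/-- A vertex-coarse-graining: a coarse-graining with no multiple-edge. -/
def IsVertexCoarseGraining (φ : G ⟶ H) : Prop :=
  IsCoarseGraining φ ∧
  ∀ (h : H.E) (e₁ e₂ : G.E), MapsToEdge φ e₁ h → MapsToEdge φ e₂ h → e₁ = e₂

/-- An edge-coarse-graining: a coarse-graining with no multiple-vertex and no
contraction. -/
def IsEdgeCoarseGraining (φ : G ⟶ H) : Prop :=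
  IsCoarseGraining φ ∧ Function.Injective (vmap φ) ∧ ∀ e : G.E, ¬ IsContractionEdge φ e

/-- A merging: a vertex-coarse-graining with no contraction. -/
def IsMerging (φ : G ⟶ H) : Prop :=
  IsVertexCoarseGraining φ ∧ ∀ e : G.E, ¬ IsContractionEdge φ e

/-- A fusion: a coarse-graining with no contraction. -/
def IsFusion (φ : G ⟶ H) : Prop :=
  IsCoarseGraining φ ∧ ∀ e : G.E, ¬ IsContractionEdge φ e

/-- An inclusion: a morphism injective on vertices and on directed paths
(an injective-on-objects faithful functor). -/
def IsInclusion (φ : G ⟶ H) : Prop :=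
  Function.Injective (vmap φ) ∧
  ∀ (a b : G.V) (p q : Quiver.Path a b), pmap φ p = pmap φ q → p = q

/-- An embedding: an inclusion with no subdivision. -/
def IsEmbedding (φ : G ⟶ H) : Prop :=
  IsInclusion φ ∧ ∀ e : G.E, ¬ IsSubdivisionEdge φ e

/-- An immersion: an inclusion such that images of distinct subdivision edges
share no edge. -/
def IsImmersion (φ : G ⟶ H) : Prop :=
  IsInclusion φ ∧
  ∀ e₁ e₂ : G.E, e₁ ≠ e₂ → IsSubdivisionEdge φ e₁ → IsSubdivisionEdge φ e₂ →
    ∀ h : H.E, h ∈ pathEdges (edgePath φ e₁) → h ∉ pathEdges (edgePath φ e₂)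

/-- The internal vertices of a directed path (all visited vertices except the
two endpoints). -/
def internalVertices {a b : G.V} (p : Quiver.Path a b) : List G.V :=
  ((pathVertices p).dropLast).tail

/-- A strong morphism: all internal vertices of images of subdivision edges are
null-vertices. -/
def IsStrong (φ : G ⟶ H) : Prop :=
  ∀ e : G.E, IsSubdivisionEdge φ e →
    ∀ v ∈ internalVertices (edgePath φ e), ∀ w : G.V, vmap φ w ≠ v

/-- A vertex-disjoint morphism: images of distinct subdivision edges share no
internal vertex. -/
def IsVertexDisjoint (φ : G ⟶ H) : Prop :=
  ∀ e₁ e₂ : G.E, e₁ ≠ e₂ → IsSubdivisionEdge φ e₁ → IsSubdivisionEdge φ e₂ →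
    ∀ v : H.V, v ∈ internalVertices (edgePath φ e₁) → v ∉ internalVertices (edgePath φ e₂)

/-- A topological embedding: a strong vertex-disjoint inclusion. -/
def IsTopologicalEmbedding (φ : G ⟶ H) : Prop :=
  IsInclusion φ ∧ IsStrong φ ∧ IsVertexDisjoint φ

/-- The edge `e` covers the vertex `v` if `v` occurs on the path `φ(e)`. -/
def Covers (φ : G ⟶ H) (e : G.E) (v : H.V) : Prop :=
  v ∈ pathVertices (edgePath φ e)

/-- An isolated vertex: a vertex incident to no edge. -/
def IsolatedVertex (G : CausalNet) (v : G.V) : Prop :=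
  ∀ e : G.E, G.src e ≠ v ∧ G.tgt e ≠ v

/-- A subdivision morphism: a topological embedding such that every non-isolated
vertex of the codomain is covered and every isolated vertex of the codomain is a
simple-vertex. -/
def IsSubdivisionMor (φ : G ⟶ H) : Prop :=
  IsTopologicalEmbedding φ ∧
  (∀ v : H.V, ¬ IsolatedVertex H v → ∃ e : G.E, Covers φ e v) ∧
  (∀ v : H.V, IsolatedVertex H v → ∃! w : G.V, vmap φ w = v)

theorem mapPath_length {V W : Type} [Quiver V] [Quiver W] (F : V ⥤q W) :
    ∀ {a b : V} (p : Quiver.Path a b), (F.mapPath p).length = p.length := by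
  intro a b p
  induction p with
  | nil => rfl
  | cons q f ih =>
      show ((F.mapPath q).cons (F.map f)).length = (q.cons f).length
      rw [Quiver.Path.length_cons, Quiver.Path.length_cons, ih]

theorem noCycleData_of_map {V₁ E₁ : Type} (s₁ t₁ : E₁ → V₁) (G : CausalNet)
    (f : V₁ → G.V) (g : E₁ → G.E)
    (hs : ∀ e, G.src (g e) = f (s₁ e)) (ht : ∀ e, G.tgt (g e) = f (t₁ e)) :
    NoCycleData V₁ E₁ s₁ t₁ := by
  letI : Quiver V₁ := ⟨fun a b => { e : E₁ // s₁ e = a ∧ t₁ e = b }⟩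
  intro v p
  let F : V₁ ⥤q G.V :=
    { obj := f
      map := fun {a b} e =>
        ⟨g (Subtype.val e), by rw [hs, (Subtype.prop e).1], by rw [ht, (Subtype.prop e).2]⟩ }
  have h := G.acyclic (f v) (F.mapPath p)
  rw [mapPath_length] at h
  exact h

theorem noCycleData_of_lt {V E : Type} [Preorder V] (s t : E → V)
    (hlt : ∀ e, s e < t e) : NoCycleData V E s t := by
  letI : Quiver V := ⟨fun a b => { e : E // s e = a ∧ t e = b }⟩
  have key : ∀ {a b : V} (p : Quiver.Path a b), (a = b ∧ p.length = 0) ∨ a < b := by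
    intro a b p
    induction p with
    | nil => exact Or.inl ⟨rfl, rfl⟩
    | cons q f ih =>
        have hcb := hlt (Subtype.val f)
        rw [(Subtype.prop f).1, (Subtype.prop f).2] at hcb
        rcases ih with ⟨h, _⟩ | h
        · exact Or.inr (by rw [h]; exact hcb)
        · exact Or.inr (lt_trans h hcb)
  intro v p
  rcases key p with ⟨_, h⟩ | h
  · exact h
  · exact absurd h (lt_irrefl v)

/-- The sub-causal-net spanned by a set of vertices and a set of edges. -/
noncomputable def mkSub (G : CausalNet) (Vs : Set G.V) (Es : Set G.E)
    (hs : ∀ e ∈ Es, G.src e ∈ Vs) (ht : ∀ e ∈ Es, G.tgt e ∈ Vs) : CausalNet where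
  V := Vs
  E := Es
  src e := ⟨G.src e.1, hs e.1 e.2⟩
  tgt e := ⟨G.tgt e.1, ht e.1 e.2⟩
  fintypeV := Fintype.ofFinite _
  fintypeE := Fintype.ofFinite _
  acyclic := noCycleData_of_map _ _ G Subtype.val Subtype.val (fun _ => rfl) (fun _ => rfl)

/-- The fiber of a morphism at a vertex `v` of the codomain: the sub-causal-net
of the domain on the vertices mapped to `v` and the edges mapped to the identity
path at `v`. -/
noncomputable def fiber (φ : G ⟶ H) (v : H.V) : CausalNet :=
  mkSub G {w : G.V | vmap φ w = v}
    {e : G.E | IsContractionEdge φ e ∧ vmap φ (G.src e) = v}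
    (fun _ he => he.2)
    (fun e he =>
      show vmap φ (G.tgt e) = v from
        Quiver.Path.eq_of_length_zero (edgePath φ e) he.1 ▸ he.2)

/-- The underlying undirected (simple) graph of a causal-net. -/
def undirected (G : CausalNet) : SimpleGraph G.V where
  Adj v w := v ≠ w ∧ ∃ e : G.E, (G.src e = v ∧ G.tgt e = w) ∨ (G.src e = w ∧ G.tgt e = v)
  symm := by
    constructor
    rintro v w ⟨hne, e, he⟩
    exact ⟨hne.symm, e, he.symm⟩
  loopless := by
    constructor
    intro v h
    exact h.1 rfl

/-- A causal-net is connected if its underlying undirected graph is connected. -/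
def Connected (G : CausalNet) : Prop := (undirected G).Connected

/-- A causal-Tree: a causal-net whose simplification has a tree as underlying
undirected graph.  (Since a causal-net is acyclic, the underlying undirected
graph of its simplification is exactly `undirected G`.) -/
def IsCausalTree (G : CausalNet) : Prop := (undirected G).IsTree

/-- A contraction: a vertex-coarse-graining all of whose fibers are connected. -/
def IsContractionMor (φ : G ⟶ H) : Prop :=
  IsVertexCoarseGraining φ ∧ ∀ v : H.V, Connected (fiber φ v)

/-- A simple contraction: a contraction with exactly one non-trivial fiber, that
fiber consisting of two vertices together with all edges from the first to the
second. -/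
def IsSimpleContraction (φ : G ⟶ H) : Prop :=
  IsContractionMor φ ∧
  ∃ w₁ w₂ : G.V, w₁ ≠ w₂ ∧ vmap φ w₁ = vmap φ w₂ ∧
    (∃ e : G.E, G.src e = w₁ ∧ G.tgt e = w₂) ∧
    (∀ e : G.E, IsContractionEdge φ e ↔ (G.src e = w₁ ∧ G.tgt e = w₂)) ∧
    (∀ u u' : G.V, vmap φ u = vmap φ u' →
      u = u' ∨ ((u = w₁ ∨ u = w₂) ∧ (u' = w₁ ∨ u' = w₂)))

/-- A tree-contraction: a contraction all of whose fibers are causal-Trees. -/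
def IsTreeContraction (φ : G ⟶ H) : Prop :=
  IsContractionMor φ ∧ ∀ v : H.V, IsCausalTree (fiber φ v)

/-- A directed multi-path: a causal-net whose simplification is a directed path. -/
def IsDirectedMultiPath (K : CausalNet) : Prop :=
  ∃ (a b : K.V) (p : Quiver.Path a b),
    (pathVertices p).Nodup ∧ (∀ v : K.V, v ∈ pathVertices p) ∧
    ∀ e : K.E, ∃ h ∈ pathEdges p, K.src e = K.src h ∧ K.tgt e = K.tgt h

/-- A path-contraction: a vertex-coarse-graining all of whose fibers are
directed multi-paths. -/
def IsPathContraction (φ : G ⟶ H) : Prop :=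
  IsVertexCoarseGraining φ ∧ ∀ v : H.V, IsDirectedMultiPath (fiber φ v)

/-- A point: a causal-net with exactly one vertex and no edges. -/
def IsPoint (A : CausalNet) : Prop := (∃ v : A.V, ∀ w : A.V, w = v) ∧ IsEmpty A.E

/-- Reachability: there is a directed path from `a` to `b`. -/
def Reaches (G : CausalNet) (a b : G.V) : Prop := Nonempty (Quiver.Path a b)

/-- A coclique: a set of vertices no two distinct members of which are
comparable under the reachability order. -/
def IsCoclique (G : CausalNet) (S : Set G.V) : Prop :=
  ∀ a ∈ S, ∀ b ∈ S, a ≠ b → ¬ Reaches G a b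

/-- A multi-edge: the nonempty set of all edges from one fixed vertex to another. -/
def IsMultiEdge (G : CausalNet) (s : Set G.E) : Prop :=
  s.Nonempty ∧ ∃ a b : G.V, s = {e : G.E | G.src e = a ∧ G.tgt e = b}

/-- The pair of vertices whose multi-edge is contracted by a simple contraction. -/
def ContractedPair (φ : G ⟶ H) (w₁ w₂ : G.V) : Prop :=
  w₁ ≠ w₂ ∧ vmap φ w₁ = vmap φ w₂ ∧ (∃ e : G.E, G.src e = w₁ ∧ G.tgt e = w₂) ∧
  ∀ e : G.E, IsContractionEdge φ e ↔ (G.src e = w₁ ∧ G.tgt e = w₂)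

/-- Two causal-nets are isomorphic in `Cau`. -/
def IsIsomorphicTo (A B : CausalNet) : Prop := ∃ φ : A ⟶ B, IsIso φ

/-- A simple causal-net: at most one edge between any ordered pair of vertices. -/
def IsSimpleNet (G : CausalNet) : Prop :=
  ∀ e₁ e₂ : G.E, G.src e₁ = G.src e₂ → G.tgt e₁ = G.tgt e₂ → e₁ = e₂

/-- A harmonic causal-net: every fusion out of it is an isomorphism. -/
def Harmonic (G : CausalNet) : Prop :=
  ∀ (H : CausalNet) (φ : G ⟶ H), IsFusion φ → IsIso φ

/-- A hamiltonian path: a directed path visiting every vertex exactly once. -/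
def HasHamiltonianPath (G : CausalNet) : Prop :=
  ∃ (a b : G.V) (p : Quiver.Path a b),
    (pathVertices p).Nodup ∧ ∀ v : G.V, v ∈ pathVertices p

/-- Morphisms which can be written as a composition of finitely many morphisms
each satisfying `P`. -/
inductive IsCompOf (P : ∀ ⦃A B : CausalNet⦄, (A ⟶ B) → Prop) :
    ∀ {A B : CausalNet}, (A ⟶ B) → Prop
  | of {A B : CausalNet} (φ : A ⟶ B) : P φ → IsCompOf P φ
  | comp {A B C : CausalNet} (φ : A ⟶ B) (ψ : B ⟶ C) :
      IsCompOf P φ → IsCompOf P ψ → IsCompOf P (φ ≫ ψ)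

inductive PrimContrSeq (G : CausalNet) : ∀ {K : CausalNet}, (G ⟶ K) → Prop
  | refl : PrimContrSeq G (𝟙 G)
  | step {K L : CausalNet} (μ : G ⟶ K) (φ : K ⟶ L) :
      PrimContrSeq G μ → IsSimpleContraction φ →
      (∀ w₁ w₂ : K.V, ContractedPair φ w₁ w₂ →
        IsMultiEdge G {e : G.E | ∃ h : K.E, K.src h = w₁ ∧ K.tgt h = w₂ ∧ MapsToEdge μ e h}) →
      PrimContrSeq G (μ ≫ φ)

section Paths

@[simp] theorem pathEdges_nil {a : G.V} : pathEdges (Quiver.Path.nil : Quiver.Path a a) = [] := by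
  rw [pathEdges]

@[simp] theorem pathEdges_cons {a b c : G.V} (p : Quiver.Path a b) (f : b ⟶ c) :
    pathEdges (p.cons f) = pathEdges p ++ [homEdge f] := by
  rw [pathEdges]

@[simp] theorem length_pathEdges {a b : G.V} (p : Quiver.Path a b) :
    (pathEdges p).length = p.length := by
  induction p with
  | nil => simp
  | cons p f ih => simp [ih]

theorem src_tgt_of_pathEdges_eq_singleton {a b : G.V} {p : Quiver.Path a b} {h : G.E}
    (hp : pathEdges p = [h]) : a = G.src h ∧ b = G.tgt h := by
  cases p with
  | nil => simp at hp
  | cons q f =>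
    obtain ⟨hq, rfl⟩ : pathEdges q = [] ∧ homEdge f = h := by
      simpa [List.append_eq_singleton_iff] using hp
    obtain rfl := Quiver.Path.eq_of_length_zero q (by simpa using congrArg List.length hq)
    exact ⟨f.2.1.symm, f.2.2.symm⟩

theorem src_ne_tgt (e : G.E) : G.src e ≠ G.tgt e := fun h => by
  simpa using G.acyclic _ (Quiver.Path.nil.cons (⟨e, rfl, h.symm⟩ : G.src e ⟶ G.src e))

theorem tgt_ne_src_of_tgt_eq_src {e e' : G.E} (h : G.tgt e = G.src e') :
    G.tgt e' ≠ G.src e := fun h' => by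
  simpa using G.acyclic _ ((Quiver.Path.nil.cons (edgeHom G e)).cons
    (⟨e', h.symm, h'⟩ : G.tgt e ⟶ G.src e))

end Paths

section Morphisms

variable (φ : G ⟶ H) (ψ : H ⟶ K)

theorem length_pmap_of_length_eq_zero {a b : G.V} {p : Quiver.Path a b} (hp : p.length = 0) :
    (pmap φ p).length = 0 := by
  cases p with
  | nil => exact congrArg Quiver.Path.length ((φ : Paths G.V ⥤ Paths H.V).map_id a)
  | cons q f => simp at hp

theorem pathEdges_pmap_of_pathEdges_eq_singleton {a b : G.V} {p : Quiver.Path a b} {h : G.E}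
    (hp : pathEdges p = [h]) : pathEdges (pmap φ p) = pathEdges (edgePath φ h) := by
  cases p with
  | nil => simp at hp
  | cons q f =>
    obtain ⟨hq, rfl⟩ : pathEdges q = [] ∧ homEdge f = h := by
      simpa [List.append_eq_singleton_iff] using hp
    cases q with
    | nil => obtain ⟨e, rfl, rfl⟩ := f; rfl
    | cons _ _ => simp at hq

variable {φ}

theorem isContractionEdge_iff_pathEdges_eq_nil (e : G.E) :
    IsContractionEdge φ e ↔ pathEdges (edgePath φ e) = [] := by
  rw [IsContractionEdge, ← length_pathEdges, List.length_eq_zero_iff]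

theorem isContractionEdge_or_exists_mapsToEdge {e : G.E} (he : ¬ IsSubdivisionEdge φ e) :
    IsContractionEdge φ e ∨ ∃ h, MapsToEdge φ e h := by
  rw [IsSubdivisionEdge, ← length_pathEdges] at he
  rw [isContractionEdge_iff_pathEdges_eq_nil]
  match hl : pathEdges (edgePath φ e), he with
  | [], _ => exact Or.inl rfl
  | [h], _ => exact Or.inr ⟨h, hl⟩
  | _ :: _ :: _, he => simp at he

theorem vmap_eq_of_isContractionEdge {e : G.E} (hc : IsContractionEdge φ e) :
    vmap φ (G.src e) = vmap φ (G.tgt e) :=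
  Quiver.Path.eq_of_length_zero _ hc

theorem vmap_eq_of_mapsToEdge {e : G.E} {h : H.E} (hm : MapsToEdge φ e h) :
    vmap φ (G.src e) = H.src h ∧ vmap φ (G.tgt e) = H.tgt h :=
  src_tgt_of_pathEdges_eq_singleton hm

theorem isContractionEdge_comp {e : G.E} (hc : IsContractionEdge φ e) :
    IsContractionEdge (φ ≫ ψ) e :=
  length_pmap_of_length_eq_zero ψ hc

theorem pathEdges_edgePath_comp {e : G.E} {h : H.E} (hm : MapsToEdge φ e h) :
    pathEdges (edgePath (φ ≫ ψ) e) = pathEdges (edgePath ψ h) :=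
  pathEdges_pmap_of_pathEdges_eq_singleton ψ hm

theorem mapsToEdge_iff_eq {e : G.E} {h : H.E} (hm : MapsToEdge φ e h) (h' : H.E) :
    MapsToEdge φ e h' ↔ h' = h := by
  rw [MapsToEdge, show pathEdges (edgePath φ e) = [h] from hm, List.singleton_inj, eq_comm]

theorem not_isContractionEdge_of_mapsToEdge {e : G.E} {h : H.E} (hm : MapsToEdge φ e h) :
    ¬ IsContractionEdge φ e := by
  simp [isContractionEdge_iff_pathEdges_eq_nil, show pathEdges (edgePath φ e) = [h] from hm]

variable (hφ : ∀ e, ¬ IsSubdivisionEdge φ e)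
include hφ

theorem isContractionEdge_comp_iff (e : G.E) : IsContractionEdge (φ ≫ ψ) e ↔
    IsContractionEdge φ e ∨ ∃ h, MapsToEdge φ e h ∧ IsContractionEdge ψ h := by
  rcases isContractionEdge_or_exists_mapsToEdge (hφ e) with hc | ⟨h, hm⟩
  · exact iff_of_true (isContractionEdge_comp ψ hc) (Or.inl hc)
  · simp only [mapsToEdge_iff_eq hm, exists_eq_left, not_isContractionEdge_of_mapsToEdge hm,
      false_or, isContractionEdge_iff_pathEdges_eq_nil, pathEdges_edgePath_comp ψ hm]

theorem mapsToEdge_comp_iff (e : G.E) (k : K.E) :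
    MapsToEdge (φ ≫ ψ) e k ↔ ∃ h, MapsToEdge φ e h ∧ MapsToEdge ψ h k := by
  rcases isContractionEdge_or_exists_mapsToEdge (hφ e) with hc | ⟨h, hm⟩
  · refine iff_of_false (fun hk => ?_) (fun ⟨h, hm, _⟩ => ?_)
    · exact not_isContractionEdge_of_mapsToEdge hk (isContractionEdge_comp ψ hc)
    · exact not_isContractionEdge_of_mapsToEdge hm hc
  · simp only [mapsToEdge_iff_eq hm, exists_eq_left]
    rw [MapsToEdge, MapsToEdge, pathEdges_edgePath_comp ψ hm]

theorem not_isSubdivisionEdge_comp (hψ : ∀ h, ¬ IsSubdivisionEdge ψ h) (e : G.E) :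
    ¬ IsSubdivisionEdge (φ ≫ ψ) e := by
  rcases isContractionEdge_or_exists_mapsToEdge (hφ e) with hc | ⟨h, hm⟩
  · have := isContractionEdge_comp ψ hc
    rw [IsContractionEdge] at this
    rw [IsSubdivisionEdge, this]; omega
  · have := hψ h
    rwa [IsSubdivisionEdge, ← length_pathEdges, pathEdges_edgePath_comp ψ hm, length_pathEdges]

end Morphisms

section ContractedGraph

def spannedGraph (G : CausalNet) (S : Set G.E) : SimpleGraph G.V :=
  SimpleGraph.fromEdgeSet ((fun e => s(G.src e, G.tgt e)) '' S)

theorem spannedGraph_adj {S : Set G.E} {x y : G.V} : (spannedGraph G S).Adj x y ↔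
    x ≠ y ∧ ∃ e ∈ S, (G.src e = x ∧ G.tgt e = y) ∨ (G.src e = y ∧ G.tgt e = x) := by
  simp only [spannedGraph, SimpleGraph.fromEdgeSet_adj, Set.mem_image, Sym2.eq_iff]
  exact and_comm

theorem undirected_eq_spannedGraph_univ : undirected G = spannedGraph G Set.univ := by
  ext x y
  simp [spannedGraph_adj, undirected]

theorem spannedGraph_union_eq_sup_edge (S : Set G.E) {a b : G.V}
    (hab : ∃ e, G.src e = a ∧ G.tgt e = b) :
    spannedGraph G (S ∪ {e | G.src e = a ∧ G.tgt e = b}) =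
      spannedGraph G S ⊔ SimpleGraph.edge a b := by
  have himage :
      (fun e => s(G.src e, G.tgt e)) '' {e | G.src e = a ∧ G.tgt e = b} = {s(a, b)} := by
    obtain ⟨e, he⟩ := hab
    ext z
    simp only [Set.mem_image, Set.mem_ofPred_eq, Set.mem_singleton_iff]
    exact ⟨fun ⟨_, ⟨hs, ht⟩, hz⟩ => hz ▸ hs ▸ ht ▸ rfl,
      fun hz => ⟨e, he, he.1 ▸ he.2 ▸ hz.symm⟩⟩
  rw [spannedGraph, spannedGraph, Set.image_union, himage, SimpleGraph.fromEdgeSet_union]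
  rfl

def contractedGraph (μ : G ⟶ K) : SimpleGraph G.V :=
  spannedGraph G {e | IsContractionEdge μ e}

theorem vmap_eq_of_reachable_contractedGraph {μ : G ⟶ K} {x y : G.V}
    (h : (contractedGraph μ).Reachable x y) : vmap μ x = vmap μ y := by
  obtain ⟨w⟩ := h
  induction w with
  | nil => rfl
  | cons hadj _ ih =>
    obtain ⟨-, e, hc, ⟨rfl, rfl⟩ | ⟨rfl, rfl⟩⟩ := spannedGraph_adj.mp hadj
    · exact (vmap_eq_of_isContractionEdge hc).trans ih
    · exact (vmap_eq_of_isContractionEdge hc).symm.trans ih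

end ContractedGraph

/-- The invariant maintained along a `PrimContrSeq`: the fibers are the components of the
forest of contracted edges. -/
structure IsForestContraction (μ : G ⟶ K) : Prop where
  not_isSubdivisionEdge : ∀ e, ¬ IsSubdivisionEdge μ e
  surjective : Function.Surjective (vmap μ)
  reachable_of_vmap_eq : ∀ a b, vmap μ a = vmap μ b → (contractedGraph μ).Reachable a b
  isAcyclic : (contractedGraph μ).IsAcyclic

theorem isForestContraction_id : IsForestContraction (𝟙 G) := by
  have hid (e : G.E) : (edgePath (𝟙 G) e).length = 1 := rfl
  have hbot : contractedGraph (𝟙 G) = ⊥ := by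
    ext x y
    simp [contractedGraph, spannedGraph_adj, IsContractionEdge, hid]
  refine ⟨fun e => by simp [IsSubdivisionEdge, hid], fun v => ⟨v, rfl⟩, ?_, ?_⟩
  · rintro a b (rfl : a = b)
    rfl
  · rw [hbot]
    exact SimpleGraph.isAcyclic_bot

theorem contractedGraph_comp_eq_sup_edge {L : CausalNet} {μ : G ⟶ K} {φ : K ⟶ L}
    (hμ : ∀ e, ¬ IsSubdivisionEdge μ e) {w₁ w₂ : K.V}
    (hφ : ∀ h, IsContractionEdge φ h ↔ K.src h = w₁ ∧ K.tgt h = w₂) {a b : G.V}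
    (hM : {e : G.E | ∃ h : K.E, K.src h = w₁ ∧ K.tgt h = w₂ ∧ MapsToEdge μ e h} =
      {e | G.src e = a ∧ G.tgt e = b})
    (hab : ∃ e, G.src e = a ∧ G.tgt e = b) :
    contractedGraph (μ ≫ φ) = contractedGraph μ ⊔ SimpleGraph.edge a b := by
  have hcontr : {e | IsContractionEdge (μ ≫ φ) e} =
      {e | IsContractionEdge μ e} ∪ {e | G.src e = a ∧ G.tgt e = b} := by
    ext e
    rw [← hM]
    simp only [Set.mem_ofPred_eq, Set.mem_union, isContractionEdge_comp_iff φ hμ, hφ]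
    exact or_congr_right (exists_congr fun h => by tauto)
  rw [contractedGraph, hcontr, spannedGraph_union_eq_sup_edge _ hab]
  rfl

theorem IsForestContraction.comp {L : CausalNet} {μ : G ⟶ K} {φ : K ⟶ L}
    (hμ : IsForestContraction μ) (hφ : IsSimpleContraction φ)
    (hcond : ∀ w₁ w₂ : K.V, ContractedPair φ w₁ w₂ →
      IsMultiEdge G
        {e : G.E | ∃ h : K.E, K.src h = w₁ ∧ K.tgt h = w₂ ∧ MapsToEdge μ e h}) :
    IsForestContraction (μ ≫ φ) := by
  obtain ⟨w₁, w₂, hne, hvm, hex, hiff, hfib⟩ := hφ.2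
  obtain ⟨⟨e₀, he₀⟩, a, b, hM⟩ := hcond w₁ w₂ ⟨hne, hvm, hex, hiff⟩
  obtain ⟨h₀, hs₀, ht₀, hm₀⟩ := he₀
  obtain ⟨rfl, rfl⟩ : G.src e₀ = a ∧ G.tgt e₀ = b :=
    (Set.ext_iff.mp hM e₀).mp ⟨h₀, hs₀, ht₀, hm₀⟩
  have hgraph :=
    contractedGraph_comp_eq_sup_edge hμ.not_isSubdivisionEdge hiff hM ⟨e₀, rfl, rfl⟩
  have hle : contractedGraph μ ≤ contractedGraph (μ ≫ φ) := hgraph ▸ le_sup_left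
  have hvm₀ := vmap_eq_of_mapsToEdge hm₀
  rw [hs₀, ht₀] at hvm₀
  have hreach : ∀ z, vmap μ z = w₁ ∨ vmap μ z = w₂ →
      (contractedGraph (μ ≫ φ)).Reachable z (G.src e₀) := by
    have hadj : (contractedGraph (μ ≫ φ)).Adj (G.tgt e₀) (G.src e₀) := by
      rw [hgraph]
      exact Or.inr ((SimpleGraph.edge_adj _ _ _ _).mpr
        ⟨Or.inr ⟨rfl, rfl⟩, (src_ne_tgt e₀).symm⟩)
    rintro z (hz | hz)
    · exact (hμ.reachable_of_vmap_eq _ _ (hz.trans hvm₀.1.symm)).mono hle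
    · exact ((hμ.reachable_of_vmap_eq _ _ (hz.trans hvm₀.2.symm)).mono hle).trans hadj.reachable
  have hsurj : Function.Surjective (vmap φ ∘ vmap μ) :=
    Function.Surjective.comp (show Function.Surjective (vmap φ) from hφ.1.1.1.1.1) hμ.surjective
  refine ⟨not_isSubdivisionEdge_comp φ hμ.not_isSubdivisionEdge hφ.1.1.1.2, hsurj,
    fun x y hxy => ?_, ?_⟩
  · rcases hfib _ _ hxy with h | ⟨hx, hy⟩
    · exact (hμ.reachable_of_vmap_eq x y h).mono hle
    · exact (hreach x hx).trans (hreach y hy).symm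
  · rw [hgraph]
    refine hμ.isAcyclic.sup_edge_of_not_reachable fun h => hne ?_
    rw [← hvm₀.1, ← hvm₀.2]
    exact vmap_eq_of_reachable_contractedGraph h

theorem PrimContrSeq.isForestContraction {μ : G ⟶ K} (hμ : PrimContrSeq G μ) :
    IsForestContraction μ := by
  induction hμ with
  | refl => exact isForestContraction_id
  | step _ _ _ hφ hcond ih => exact ih.comp hφ hcond

theorem IsForestContraction.isCausalTree {μ : G ⟶ K} (hμ : IsForestContraction μ)
    (hK : IsPoint K) : IsCausalTree G := by
  have hall (e : G.E) : IsContractionEdge μ e := by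
    rw [isContractionEdge_iff_pathEdges_eq_nil]
    cases pathEdges (edgePath μ e) with
    | nil => rfl
    | cons h _ => exact hK.2.elim h
  have hgraph : contractedGraph μ = undirected G := by
    simp only [contractedGraph, hall, Set.ofPred_true, undirected_eq_spannedGraph_univ]
  obtain ⟨v, hv⟩ := hK.1
  obtain ⟨x, -⟩ := hμ.surjective v
  rw [IsCausalTree, ← hgraph]
  exact ⟨(SimpleGraph.connected_iff_exists_forall_reachable _).mpr
    ⟨x, fun y => hμ.reachable_of_vmap_eq x y ((hv _).trans (hv _).symm)⟩, hμ.isAcyclic⟩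

section OfEdgeMap

theorem pathEdges_cast {a b b' : G.V} (h : b = b') (p : Quiver.Path a b) :
    pathEdges (p.cast rfl h) = pathEdges p := by
  subst h
  rfl

variable (f : G.V → H.V) (g : G.E → Option H.E)
  (hnone : ∀ e, g e = none → f (G.src e) = f (G.tgt e))
  (hsome : ∀ e h, g e = some h → H.src h = f (G.src e) ∧ H.tgt h = f (G.tgt e))

def edgeImage (e : G.E) : Quiver.Path (f (G.src e)) (f (G.tgt e)) :=
  match hx : g e with
  | none => Quiver.Path.nil.cast rfl (hnone e hx)
  | some h =>
    Quiver.Hom.toPath (⟨h, (hsome e h hx).1, (hsome e h hx).2⟩ : f (G.src e) ⟶ f (G.tgt e))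

def arrowImage : {a b : G.V} → (a ⟶ b) → Quiver.Path (f a) (f b)
  | _, _, ⟨e, rfl, rfl⟩ => edgeImage f g hnone hsome e

/-- The morphism acting on vertices by `f` and on edges by `g`, where `g e = none` means that
`e` is contracted. -/
def ofEdgeMap : G ⟶ H :=
  Paths.lift { obj := f, map := arrowImage f g hnone hsome }

theorem vmap_ofEdgeMap : vmap (ofEdgeMap f g hnone hsome) = f := rfl

theorem pathEdges_edgeImage (e : G.E) :
    pathEdges (edgeImage f g hnone hsome e) = (g e).toList := by
  unfold edgeImage
  split
  next hx => rw [pathEdges_cast, pathEdges_nil, hx, Option.toList_none]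
  next h hx => simp [hx, Quiver.Hom.toPath, homEdge]

theorem pathEdges_edgePath_ofEdgeMap (e : G.E) :
    pathEdges (edgePath (ofEdgeMap f g hnone hsome) e) = (g e).toList := by
  rw [edgePath, pmap, ofEdgeMap, Paths.lift_toPath]
  unfold edgeHom
  simp only [arrowImage]
  exact pathEdges_edgeImage f g hnone hsome e

theorem isContractionEdge_ofEdgeMap_iff (e : G.E) :
    IsContractionEdge (ofEdgeMap f g hnone hsome) e ↔ g e = none := by
  rw [isContractionEdge_iff_pathEdges_eq_nil, pathEdges_edgePath_ofEdgeMap,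
    Option.toList_eq_nil_iff]

theorem mapsToEdge_ofEdgeMap_iff (e : G.E) (h : H.E) :
    MapsToEdge (ofEdgeMap f g hnone hsome) e h ↔ g e = some h := by
  rw [MapsToEdge, pathEdges_edgePath_ofEdgeMap, Option.toList_eq_singleton_iff]

theorem not_isSubdivisionEdge_ofEdgeMap (e : G.E) :
    ¬ IsSubdivisionEdge (ofEdgeMap f g hnone hsome) e := by
  rw [IsSubdivisionEdge, ← length_pathEdges, pathEdges_edgePath_ofEdgeMap, not_le]
  exact Nat.lt_succ_of_le Option.length_toList_le

end OfEdgeMap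

theorem isSimpleContraction_of {φ : G ⟶ H} (hφ : IsVertexCoarseGraining φ) {w₁ w₂ : G.V}
    (hex : ∃ e, G.src e = w₁ ∧ G.tgt e = w₂)
    (hcontr : ∀ e, IsContractionEdge φ e ↔ G.src e = w₁ ∧ G.tgt e = w₂)
    (hfib : ∀ x y, vmap φ x = vmap φ y →
      x = y ∨ (x ∈ ({w₁, w₂} : Set G.V) ∧ y ∈ ({w₁, w₂} : Set G.V))) :
    IsSimpleContraction φ := by
  obtain ⟨e₀, rfl, rfl⟩ := hex
  have hc₀ := (hcontr e₀).mpr ⟨rfl, rfl⟩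
  have hvm := vmap_eq_of_isContractionEdge hc₀
  refine ⟨⟨hφ, fun x => ?_⟩, _, _, src_ne_tgt e₀, hvm, ⟨e₀, rfl, rfl⟩, hcontr, hfib⟩
  obtain ⟨y, hy⟩ := hφ.1.1.1 x
  have : Nonempty (fiber φ x).V := ⟨⟨y, hy⟩⟩
  refine ⟨fun p q => ?_⟩
  rcases hfib p.1 q.1 (p.2.trans q.2.symm) with hpq | ⟨hp, hq⟩
  · rw [Subtype.ext hpq]
  by_cases hpq : p = q
  · rw [hpq]
  refine SimpleGraph.Adj.reachable ⟨hpq, ⟨e₀, hc₀, ?_⟩, ?_⟩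
  · rcases hp with hp | hp
    · exact hp ▸ p.2
    · exact hvm.trans (hp ▸ p.2)
  · simp only [Set.mem_insert_iff, Set.mem_singleton_iff] at hp hq
    rcases hp with hp | hp <;> rcases hq with hq | hq
    · exact absurd (Subtype.ext (hp.trans hq.symm)) hpq
    · exact Or.inl ⟨Subtype.ext hp.symm, Subtype.ext hq.symm⟩
    · exact Or.inr ⟨Subtype.ext hq.symm, Subtype.ext hp.symm⟩
    · exact absurd (Subtype.ext (hp.trans hq.symm)) hpq

theorem mapsToEdge_id_iff (e h : G.E) : MapsToEdge (𝟙 G) e h ↔ e = h := by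
  change pathEdges (Quiver.Path.nil.cons (edgeHom G e)) = [h] ↔ e = h
  rw [pathEdges_cons, pathEdges_nil, List.nil_append, List.singleton_inj]
  rfl

theorem IsSimpleContraction.primContrSeq {φ : G ⟶ H} (hφ : IsSimpleContraction φ) :
    PrimContrSeq G φ := by
  rw [← Category.id_comp φ]
  refine .step _ _ .refl hφ fun w₁ w₂ ⟨_, _, ⟨e, he⟩, _⟩ =>
    ⟨⟨e, e, he.1, he.2, (mapsToEdge_id_iff e e).mpr rfl⟩, w₁, w₂, ?_⟩
  ext e
  simp [mapsToEdge_id_iff]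

theorem PrimContrSeq.simpleContraction_comp {G₁ : CausalNet} {φ : G ⟶ G₁}
    (hφ : IsSimpleContraction φ)
    (hpull : ∀ a₁ b₁ : G₁.V, ∃ a b : G.V, ∀ e : G.E,
      (∃ e₁, G₁.src e₁ = a₁ ∧ G₁.tgt e₁ = b₁ ∧ MapsToEdge φ e e₁) ↔
        (G.src e = a ∧ G.tgt e = b))
    {ν : G₁ ⟶ K} (hν : PrimContrSeq G₁ ν) : PrimContrSeq G (φ ≫ ν) := by
  induction hν with
  | refl => simpa using hφ.primContrSeq
  | @step K L ν ψ _ hψ hcond ih =>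
    rw [← Category.assoc]
    refine .step _ ψ ih hψ fun w₁ w₂ hpair => ?_
    obtain ⟨⟨e₁, he₁⟩, a₁, b₁, hM₁⟩ := hcond w₁ w₂ hpair
    obtain ⟨a, b, hab⟩ := hpull a₁ b₁
    have hset : {e : G.E | ∃ h, K.src h = w₁ ∧ K.tgt h = w₂ ∧ MapsToEdge (φ ≫ ν) e h} =
        {e | G.src e = a ∧ G.tgt e = b} := by
      ext e
      rw [Set.mem_ofPred_eq, Set.mem_ofPred_eq, ← hab]
      simp only [mapsToEdge_comp_iff ν hφ.1.1.1.2]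
      constructor
      · rintro ⟨h, hs, ht, e₁, hφe, hνe⟩
        have := (Set.ext_iff.mp hM₁ e₁).mp ⟨h, hs, ht, hνe⟩
        exact ⟨e₁, this.1, this.2, hφe⟩
      · rintro ⟨e₁, hs, ht, hφe⟩
        obtain ⟨h, hs', ht', hνe⟩ := (Set.ext_iff.mp hM₁ e₁).mpr ⟨hs, ht⟩
        exact ⟨h, hs', ht', e₁, hφe, hνe⟩
    obtain ⟨e, he⟩ := hφ.1.1.1.1.2 e₁
    rw [hM₁] at he₁
    exact ⟨⟨e, hset ▸ (hab e).mp ⟨e₁, he₁.1, he₁.2, he⟩⟩, a, b, hset⟩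

section DeleteVertex

variable (G) in
noncomputable abbrev CausalNet.deleteVertex (v : G.V) : CausalNet where
  V := {x : G.V // x ≠ v}
  E := {e : G.E // G.src e ≠ v ∧ G.tgt e ≠ v}
  src e := ⟨G.src e.1, e.2.1⟩
  tgt e := ⟨G.tgt e.1, e.2.2⟩
  fintypeV := Fintype.ofFinite _
  fintypeE := Fintype.ofFinite _
  acyclic := noCycleData_of_map _ _ G Subtype.val Subtype.val (fun _ => rfl) (fun _ => rfl)

def undirectedDeleteVertexIso (v : G.V) :
    undirected (G.deleteVertex v) ≃g (undirected G).induce {v}ᶜ where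
  toEquiv := Equiv.subtypeEquivRight fun _ => Set.mem_compl_singleton_iff.symm
  map_rel_iff' {x y} := by
    refine and_congr Subtype.ext_iff.not.symm
      ⟨fun ⟨e, he⟩ => ?_, fun ⟨e, he⟩ => ⟨e.1, ?_⟩⟩
    · have hev : G.src e ≠ v ∧ G.tgt e ≠ v := by
        rcases he with ⟨h1, h2⟩ | ⟨h1, h2⟩
        · exact ⟨h1 ▸ x.2, h2 ▸ y.2⟩
        · exact ⟨h1 ▸ y.2, h2 ▸ x.2⟩
      refine ⟨⟨e, hev⟩, ?_⟩
      simp only [Subtype.ext_iff]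
      exact he
    · simp only [Subtype.ext_iff] at he
      exact he

theorem IsCausalTree.deleteVertex (hT : IsCausalTree G) {v : G.V}
    (hv : ∃! u, (undirected G).Adj v u) : IsCausalTree (G.deleteVertex v) := by
  classical
  rw [IsCausalTree, (undirectedDeleteVertexIso v).isTree_iff]
  exact ⟨hT.connected.induce_compl_singleton_of_degree_eq_one
    (SimpleGraph.degree_eq_one_iff_existsUnique_adj.mpr hv), hT.isAcyclic.induce _⟩

theorem natCard_deleteVertex_lt (v : G.V) : Nat.card (G.deleteVertex v).V < Nat.card G.V :=
  Finite.card_subtype_lt (p := (· ≠ v)) (x := v) (by simp)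

end DeleteVertex

section ContractLeaf

variable {u v : G.V}

open Classical in
noncomputable def retractVertex (huv : u ≠ v) (x : G.V) : (G.deleteVertex v).V :=
  if hx : x = v then ⟨u, huv⟩ else ⟨x, hx⟩

open Classical in
noncomputable def keepEdge (v : G.V) (e : G.E) : Option (G.deleteVertex v).E :=
  if he : G.src e ≠ v ∧ G.tgt e ≠ v then some ⟨e, he⟩ else none

theorem retractVertex_of_ne (huv : u ≠ v) {x : G.V} (hx : x ≠ v) :
    retractVertex huv x = ⟨x, hx⟩ :=
  dif_neg hx

theorem retractVertex_self (huv : u ≠ v) : retractVertex huv v = ⟨u, huv⟩ :=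
  dif_pos rfl

theorem eq_or_mem_pair_of_retractVertex_eq (huv : u ≠ v) {x y : G.V}
    (hxy : retractVertex huv x = retractVertex huv y) :
    x = y ∨ (x ∈ ({u, v} : Set G.V) ∧ y ∈ ({u, v} : Set G.V)) := by
  by_cases hx : x = v <;> by_cases hy : y = v
  · exact Or.inl (hx.trans hy.symm)
  · rw [hx, retractVertex_self, retractVertex_of_ne huv hy, Subtype.ext_iff] at hxy
    exact Or.inr ⟨Or.inr hx, Or.inl hxy.symm⟩
  · rw [hy, retractVertex_self, retractVertex_of_ne huv hx, Subtype.ext_iff] at hxy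
    exact Or.inr ⟨Or.inl hxy, Or.inr hy⟩
  · rw [retractVertex_of_ne huv hx, retractVertex_of_ne huv hy, Subtype.ext_iff] at hxy
    exact Or.inl hxy

theorem keepEdge_eq_none_iff {e : G.E} : keepEdge v e = none ↔ G.src e = v ∨ G.tgt e = v := by
  unfold keepEdge
  split_ifs with he
  · exact iff_of_false (by simp) (by tauto)
  · exact iff_of_true rfl (by tauto)

theorem keepEdge_eq_some_iff {e : G.E} {h : (G.deleteVertex v).E} :
    keepEdge v e = some h ↔ h.1 = e := by
  unfold keepEdge
  split_ifs with he
  · rw [Option.some_inj, eq_comm, Subtype.ext_iff]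
  · refine iff_of_false (by simp) fun hh => he ?_
    exact hh ▸ h.2

variable (hleaf : ∀ e, (G.src e = v → G.tgt e = u) ∧ (G.tgt e = v → G.src e = u))
include hleaf

theorem retractVertex_src_eq_tgt (huv : u ≠ v) {e : G.E} (he : keepEdge v e = none) :
    retractVertex huv (G.src e) = retractVertex huv (G.tgt e) := by
  rcases keepEdge_eq_none_iff.mp he with h | h
  · rw [(hleaf e).1 h, h, retractVertex_self, retractVertex_of_ne huv huv]
  · rw [(hleaf e).2 h, h, retractVertex_self, retractVertex_of_ne huv huv]

theorem src_tgt_eq_of_incident {e e₀ : G.E} (he : G.src e = v ∨ G.tgt e = v)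
    (he₀ : G.src e₀ = v ∨ G.tgt e₀ = v) :
    G.src e = G.src e₀ ∧ G.tgt e = G.tgt e₀ := by
  have h := hleaf e
  have h₀ := hleaf e₀
  rcases he with he | he <;> rcases he₀ with he₀ | he₀
  · exact ⟨he.trans he₀.symm, (h.1 he).trans (h₀.1 he₀).symm⟩
  · exact absurd ((h.1 he).trans (h₀.2 he₀).symm)
      (tgt_ne_src_of_tgt_eq_src (he₀.trans he.symm))
  · exact absurd ((h₀.1 he₀).trans (h.2 he).symm)
      (tgt_ne_src_of_tgt_eq_src (he.trans he₀.symm))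
  · exact ⟨(h.2 he).trans (h₀.2 he₀).symm, he.trans he₀.symm⟩

theorem pair_src_tgt_eq {e₀ : G.E} (he₀ : G.src e₀ = v ∨ G.tgt e₀ = v) :
    ({G.src e₀, G.tgt e₀} : Set G.V) = {u, v} := by
  rcases he₀ with h | h
  · rw [(hleaf e₀).1 h, h, Set.pair_comm]
  · rw [(hleaf e₀).2 h, h]

/-- The contraction of the edges joining a leaf `v` of `G` to its neighbour `u`. -/
noncomputable def contractLeaf (huv : u ≠ v) : G ⟶ G.deleteVertex v :=
  ofEdgeMap (retractVertex huv) (keepEdge v) (fun _ he => retractVertex_src_eq_tgt hleaf huv he)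
    fun e h he => by
      obtain rfl := keepEdge_eq_some_iff.mp he
      exact ⟨(retractVertex_of_ne huv h.2.1).symm, (retractVertex_of_ne huv h.2.2).symm⟩

variable (huv : u ≠ v)

theorem vmap_contractLeaf : vmap (contractLeaf hleaf huv) = retractVertex huv :=
  vmap_ofEdgeMap _ _ _ _

theorem isContractionEdge_contractLeaf_iff (e : G.E) :
    IsContractionEdge (contractLeaf hleaf huv) e ↔ G.src e = v ∨ G.tgt e = v := by
  rw [contractLeaf, isContractionEdge_ofEdgeMap_iff, keepEdge_eq_none_iff]

theorem mapsToEdge_contractLeaf_iff (e : G.E) (h : (G.deleteVertex v).E) :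
    MapsToEdge (contractLeaf hleaf huv) e h ↔ h.1 = e := by
  rw [contractLeaf, mapsToEdge_ofEdgeMap_iff, keepEdge_eq_some_iff]

theorem isVertexCoarseGraining_contractLeaf : IsVertexCoarseGraining (contractLeaf hleaf huv) := by
  simp only [IsVertexCoarseGraining, IsCoarseGraining, IsQuotientMor, mapsToEdge_contractLeaf_iff,
    vmap_contractLeaf]
  exact ⟨⟨⟨fun x => ⟨x.1, retractVertex_of_ne huv x.2⟩, fun h => ⟨h.1, rfl⟩⟩,
    not_isSubdivisionEdge_ofEdgeMap _ _ _ _⟩, fun h e₁ e₂ h₁ h₂ => h₁.symm.trans h₂⟩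

theorem isSimpleContraction_contractLeaf {e₀ : G.E} (he₀ : G.src e₀ = v ∨ G.tgt e₀ = v) :
    IsSimpleContraction (contractLeaf hleaf huv) := by
  refine isSimpleContraction_of (isVertexCoarseGraining_contractLeaf hleaf huv) ⟨e₀, rfl, rfl⟩
    (fun e => ?_) (fun x y hxy => ?_)
  · rw [isContractionEdge_contractLeaf_iff]
    refine ⟨fun he => src_tgt_eq_of_incident hleaf he he₀, fun ⟨hs, ht⟩ => ?_⟩
    rwa [hs, ht]
  · rw [pair_src_tgt_eq hleaf he₀]
    exact eq_or_mem_pair_of_retractVertex_eq huv hxy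

theorem exists_mapsToEdge_contractLeaf_iff (a₁ b₁ : (G.deleteVertex v).V) (e : G.E) :
    (∃ e₁, (G.deleteVertex v).src e₁ = a₁ ∧ (G.deleteVertex v).tgt e₁ = b₁ ∧
      MapsToEdge (contractLeaf hleaf huv) e e₁) ↔ (G.src e = a₁.1 ∧ G.tgt e = b₁.1) := by
  simp only [mapsToEdge_contractLeaf_iff, Subtype.ext_iff]
  constructor
  · rintro ⟨e₁, hs, ht, rfl⟩
    exact ⟨hs, ht⟩
  · rintro ⟨hs, ht⟩
    exact ⟨⟨e, hs ▸ a₁.2, ht ▸ b₁.2⟩, hs, ht, rfl⟩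

end ContractLeaf

theorem IsCausalTree.exists_leaf [Nontrivial G.V] (hT : IsCausalTree G) :
    ∃ v, ∃! u, (undirected G).Adj v u := by
  classical
  obtain ⟨v, hv⟩ := hT.exists_vert_degree_one_of_nontrivial
  exact ⟨v, SimpleGraph.degree_eq_one_iff_existsUnique_adj.mp hv⟩

theorem incident_edges_of_forall_adj_eq {u v : G.V} (hu : ∀ x, (undirected G).Adj v x → x = u)
    (e : G.E) : (G.src e = v → G.tgt e = u) ∧ (G.tgt e = v → G.src e = u) :=
  ⟨fun h => hu _ ⟨h ▸ src_ne_tgt e, e, Or.inl ⟨h, rfl⟩⟩,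
    fun h => hu _ ⟨h ▸ (src_ne_tgt e).symm, e, Or.inr ⟨rfl, h⟩⟩⟩

theorem isPoint_of_subsingleton [Subsingleton G.V] (v : G.V) : IsPoint G :=
  ⟨⟨v, fun w => Subsingleton.elim w v⟩, ⟨fun e => src_ne_tgt e (Subsingleton.elim _ _)⟩⟩

theorem IsCausalTree.exists_primContrSeq_isPoint (hT : IsCausalTree G) :
    ∃ (K : CausalNet) (μ : G ⟶ K), IsPoint K ∧ PrimContrSeq G μ := by
  induction hn : Nat.card G.V using Nat.strong_induction_on generalizing G with
  | _ n ih =>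
  rcases subsingleton_or_nontrivial G.V with _ | _
  · obtain ⟨v⟩ := hT.connected.nonempty
    exact ⟨G, 𝟙 G, isPoint_of_subsingleton v, .refl⟩
  obtain ⟨v, u, hvu, hu⟩ := hT.exists_leaf
  have huv : u ≠ v := hvu.ne.symm
  have hleaf := incident_edges_of_forall_adj_eq hu
  obtain ⟨K, ν, hK, hν⟩ :=
    ih _ (hn ▸ natCard_deleteVertex_lt v) (hT.deleteVertex ⟨u, hvu, hu⟩) rfl
  obtain ⟨-, e₀, he₀⟩ := hvu
  have hφ := isSimpleContraction_contractLeaf hleaf huv (e₀ := e₀) (by tauto)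
  have hpull (a₁ b₁ : (G.deleteVertex v).V) :=
    exists_mapsToEdge_contractLeaf_iff hleaf huv a₁ b₁
  exact ⟨K, contractLeaf hleaf huv ≫ ν, hK,
    PrimContrSeq.simpleContraction_comp hφ (fun a₁ b₁ => ⟨a₁.1, b₁.1, hpull a₁ b₁⟩) hν⟩

theorem causalTree_iff_primitive_contractible (G : CausalNet) :
    IsCausalTree G ↔
      ∃ (K : CausalNet) (μ : G ⟶ K), IsPoint K ∧ PrimContrSeq G μ :=
  ⟨IsCausalTree.exists_primContrSeq_isPoint,
    fun ⟨_, _, hK, hμ⟩ => hμ.isForestContraction.isCausalTree hK⟩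

end CausalNets
end

section
/- A nonempty simple causal-net is harmonic if and only if it contains a hamiltonian path. -/
/-!
Order the vertices of a causal-net by reachability. A fusion sends every edge to an edge, so it
is induced by a morphism of quivers and preserves the length of paths; since its target is
acyclic, it cannot identify two comparable vertices. If `G` has a hamiltonian path, any two
vertices are comparable, so a fusion out of `G` is bijective on vertices and, `G` being simple,
on edges: it is an isomorphism. Conversely, identifying two incomparable vertices `a` and `b`
creates no cycle (a cycle would give a path between `a` and `b`), so it is a fusion that is not
an isomorphism. Hence in a harmonic net the causal order is linear, and two consecutive
vertices in it are joined by an edge, which yields a hamiltonian path.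
-/

open CategoryTheory

namespace CausalNets

variable {G H K : CausalNet}

theorem pathVertices_eq_vertices {a b : G.V} (p : Quiver.Path a b) :
    pathVertices p = p.vertices := by
  induction p with
  | nil => simp [pathVertices]
  | cons p f ih => simp [pathVertices, ih]

theorem length_eq_zero_of_eq {a b : G.V} (hab : a = b) (p : Quiver.Path a b) : p.length = 0 := by
  subst hab
  exact G.acyclic a p

instance (G : CausalNet) : PartialOrder G.V where
  le := Quiver.Reachable
  le_refl := Quiver.Reachable.refl
  le_trans _ _ _ := Quiver.Reachable.trans
  le_antisymm := by
    rintro a b ⟨p⟩ ⟨q⟩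
    have hcycle := G.acyclic a (p.comp q)
    rw [Quiver.Path.length_comp] at hcycle
    exact p.eq_of_length_zero (by omega)

theorem le_of_path {a b : G.V} (p : Quiver.Path a b) : a ≤ b := ⟨p⟩

theorem lt_of_hom {a b : G.V} (f : a ⟶ b) : a < b := by
  refine lt_of_le_of_ne (le_of_path f.toPath) fun hab => ?_
  simpa using length_eq_zero_of_eq hab f.toPath

theorem nonempty_hom_of_covBy {a b : G.V} (hab : a ⋖ b) : Nonempty (a ⟶ b) := by
  obtain ⟨p⟩ := hab.le
  cases p with
  | nil => exact absurd rfl hab.lt.ne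
  | @cons c _ p f =>
    obtain rfl | rfl := hab.eq_or_eq (le_of_path p) (lt_of_hom f).le
    · exact ⟨f⟩
    · exact absurd (lt_of_hom f) (lt_irrefl _)

theorem _root_.Quiver.Path.exists_eq_toPath_of_length_eq_one {V : Type*} [Quiver V] {a b : V}
    (p : Quiver.Path a b) (hp : p.length = 1) : ∃ f : a ⟶ b, p = f.toPath := by
  match p, hp with
  | .cons .nil f, _ => exact ⟨f, rfl⟩

theorem _root_.Quiver.Path.reachable_or_reachable_of_mem_vertices {V : Type*} [Quiver V]
    {a b u v : V} (p : Quiver.Path a b) (hu : u ∈ p.vertices) (hv : v ∈ p.vertices) :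
    Quiver.Reachable u v ∨ Quiver.Reachable v u := by
  obtain ⟨q, r, rfl⟩ := p.exists_eq_comp_of_mem_vertices hu
  rw [Quiver.Path.vertices_comp, List.mem_append] at hv
  rcases hv with hv | hv
  · obtain ⟨-, q₂, -⟩ := q.exists_eq_comp_of_mem_vertices (List.mem_of_mem_dropLast hv)
    exact Or.inr ⟨q₂⟩
  · obtain ⟨r₁, -, -⟩ := r.exists_eq_comp_of_mem_vertices hv
    exact Or.inl ⟨r₁⟩

theorem _root_.Quiver.Path.exists_vertices_eq_of_isChain {V : Type*} [Quiver V] (a : V)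
    (l : List V) (hl : (a :: l).IsChain fun u v => Nonempty (u ⟶ v)) :
    ∃ (b : V) (p : Quiver.Path a b), p.vertices = a :: l := by
  induction l generalizing a with
  | nil => exact ⟨a, .nil, rfl⟩
  | cons c l ih =>
    obtain ⟨⟨f⟩, hl⟩ := List.isChain_cons_cons.1 hl
    obtain ⟨b, p, hp⟩ := ih c hl
    exact ⟨b, f.toPath.comp p, by simp [hp]⟩

theorem exists_eq_freeMap_of_length_eq_one {V W : Type*} [Quiver V] [Quiver W]
    (F : Paths V ⥤ Paths W) (hF : ∀ {a b : V} (f : a ⟶ b), (F.map f.toPath).length = 1) :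
    ∃ Q : V ⥤q W, F = Cat.freeMap Q := by
  choose g hg using fun {a b : V} (f : a ⟶ b) =>
    (F.map f.toPath).exists_eq_toPath_of_length_eq_one (hF f)
  refine ⟨⟨F.obj, g⟩, Paths.ext_functor rfl fun a b f => (hg f).trans ?_⟩
  -- both `eqToHom`s are `Path.nil`
  exact (Quiver.Path.nil_comp _).symm

theorem pathEdges_toPath {a b : G.V} (f : a ⟶ b) : pathEdges f.toPath = [f.1] := by
  simp [Quiver.Hom.toPath, pathEdges, homEdge]

section FreeMap

variable (Q : G.V ⥤q H.V)

def edgeMap (e : G.E) : H.E := (Q.map (edgeHom G e)).1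

theorem mapsToEdge_freeMap_iff (e : G.E) (h : H.E) :
    MapsToEdge (Cat.freeMap Q : G ⟶ H) e h ↔ edgeMap Q e = h :=
  (Eq.congr_left (pathEdges_toPath (Q.map (edgeHom G e)))).trans List.singleton_inj

theorem isFusion_freeMap_iff :
    IsFusion (Cat.freeMap Q : G ⟶ H) ↔
      Function.Surjective Q.obj ∧ Function.Surjective (edgeMap Q) := by
  have hlen : ∀ e, (edgePath (Cat.freeMap Q : G ⟶ H) e).length = 1 := fun _ => rfl
  simp only [IsFusion, IsCoarseGraining, IsQuotientMor, IsSubdivisionEdge, IsContractionEdge, hlen,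
    mapsToEdge_freeMap_iff]
  simp [vmap, Function.Surjective]

theorem val_homOfEq {a b a' b' : G.V} (f : a ⟶ b) (ha : a = a') (hb : b = b') :
    (Quiver.homOfEq f ha hb).1 = f.1 := by
  subst ha hb
  rfl

theorem val_map {a b : G.V} (f : a ⟶ b) : (Q.map f).1 = edgeMap Q f.1 := by
  obtain ⟨e, rfl, rfl⟩ := f
  rfl

theorem src_edgeMap (e : G.E) : H.src (edgeMap Q e) = Q.obj (G.src e) := (Q.map _).2.1

theorem tgt_edgeMap (e : G.E) : H.tgt (edgeMap Q e) = Q.obj (G.tgt e) := (Q.map _).2.2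

theorem isIso_freeMap (hobj : Function.Bijective Q.obj)
    (hedge : Function.Bijective (edgeMap Q)) : IsIso (X := G) (Y := H) (Cat.freeMap Q) := by
  let σ := Equiv.ofBijective _ hobj
  let ε := Equiv.ofBijective _ hedge
  have hsrc (h : H.E) : G.src (ε.symm h) = σ.symm (H.src h) := by
    rw [σ.eq_symm_apply, ← congrArg H.src (ε.apply_symm_apply h)]
    exact (src_edgeMap Q _).symm
  have htgt (h : H.E) : G.tgt (ε.symm h) = σ.symm (H.tgt h) := by
    rw [σ.eq_symm_apply, ← congrArg H.tgt (ε.apply_symm_apply h)]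
    exact (tgt_edgeMap Q _).symm
  let Q' : H.V ⥤q G.V :=
    { obj := σ.symm
      map := fun f => ⟨ε.symm f.1, by rw [hsrc, f.2.1], by rw [htgt, f.2.2]⟩ }
  have hQQ' : Q ⋙q Q' = 𝟭q G.V :=
    Prefunctor.ext' σ.symm_apply_apply fun _ _ f => Subtype.ext <| by
      rw [val_homOfEq]
      exact (congrArg ε.symm (val_map Q f)).trans (ε.symm_apply_apply _)
  have hQ'Q : Q' ⋙q Q = 𝟭q H.V :=
    Prefunctor.ext' σ.apply_symm_apply fun _ _ f => Subtype.ext <| by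
      rw [val_homOfEq]
      exact (val_map Q _).trans (ε.apply_symm_apply _)
  refine ⟨Cat.freeMap Q', ?_, ?_⟩
  · show Cat.freeMap Q ⋙ Cat.freeMap Q' = 𝟭 _
    rw [← Cat.freeMap_comp, hQQ', Cat.freeMap_id]
  · show Cat.freeMap Q' ⋙ Cat.freeMap Q = 𝟭 _
    rw [← Cat.freeMap_comp, hQ'Q, Cat.freeMap_id]

theorem injective_edgeMap (hG : IsSimpleNet G) (hobj : Function.Injective Q.obj) :
    Function.Injective (edgeMap Q) := fun e₁ e₂ he =>
  hG e₁ e₂ (hobj <| by rw [← src_edgeMap, ← src_edgeMap, he])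
    (hobj <| by rw [← tgt_edgeMap, ← tgt_edgeMap, he])

theorem injective_obj_of_total (htot : ∀ a b : G.V, a ≤ b ∨ b ≤ a) :
    Function.Injective Q.obj := by
  have key {a b : G.V} (hab : a ≤ b) (hQ : Q.obj a = Q.obj b) : a = b := by
    obtain ⟨p⟩ := hab
    have hcycle := length_eq_zero_of_eq hQ (Q.mapPath p)
    exact p.eq_of_length_zero (by rwa [mapPath_length] at hcycle)
  intro a b hQ
  rcases htot a b with hab | hba
  · exact key hab hQ
  · exact (key hba hQ.symm).symm

end FreeMap

theorem IsFusion.exists_eq_freeMap {φ : G ⟶ H} (hφ : IsFusion φ) :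
    ∃ Q : G.V ⥤q H.V, φ = Cat.freeMap Q := by
  refine exists_eq_freeMap_of_length_eq_one φ fun f => ?_
  obtain ⟨e, rfl, rfl⟩ := f
  have := hφ.1.2 e
  have := hφ.2 e
  simp only [IsSubdivisionEdge, IsContractionEdge] at *
  show (edgePath φ e).length = 1
  omega

theorem harmonic_of_hasHamiltonianPath (hG : IsSimpleNet G) (hp : HasHamiltonianPath G) :
    Harmonic G := by
  obtain ⟨a, b, p, -, hall⟩ := hp
  simp only [pathVertices_eq_vertices] at hall
  have htot (u v : G.V) : u ≤ v ∨ v ≤ u :=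
    p.reachable_or_reachable_of_mem_vertices (hall u) (hall v)
  intro H φ hφ
  obtain ⟨Q, rfl⟩ := hφ.exists_eq_freeMap
  obtain ⟨hobj, hedge⟩ := (isFusion_freeMap_iff Q).1 hφ
  have hinj := injective_obj_of_total Q htot
  exact isIso_freeMap Q ⟨hinj, hobj⟩ ⟨injective_edgeMap Q hG hinj, hedge⟩

section Merge

variable (a b : G.V)

/-- Reachability in the net obtained from `G` by identifying `a` with `b`. -/
def MergedLE (x y : G.V) : Prop := x ≤ y ∨ (x ≤ a ∧ b ≤ y) ∨ (x ≤ b ∧ a ≤ y)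

variable {a b}

theorem mergedLE_refl (x : G.V) : MergedLE a b x x := Or.inl le_rfl

theorem mergedLE_trans {x y z : G.V} :
    MergedLE a b x y → MergedLE a b y z → MergedLE a b x z := by
  rintro (hxy | ⟨hxa, hby⟩ | ⟨hxb, hay⟩) (hyz | ⟨hya, hbz⟩ | ⟨hyb, haz⟩)
  exacts [Or.inl (hxy.trans hyz), Or.inr (Or.inl ⟨hxy.trans hya, hbz⟩),
    Or.inr (Or.inr ⟨hxy.trans hyb, haz⟩), Or.inr (Or.inl ⟨hxa, hby.trans hyz⟩),
    Or.inr (Or.inl ⟨hxa, hbz⟩), Or.inl (hxa.trans haz), Or.inr (Or.inr ⟨hxb, hay.trans hyz⟩),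
    Or.inl (hxb.trans hbz), Or.inr (Or.inr ⟨hxb, haz⟩)]

variable (a b)

open Classical in
noncomputable def mergeVertex (hab : a ≠ b) (x : G.V) : {x : G.V // x ≠ b} :=
  if hx : x = b then ⟨a, hab⟩ else ⟨x, hx⟩

variable {a b}

theorem mergeVertex_of_ne (hab : a ≠ b) {x : G.V} (hx : x ≠ b) :
    mergeVertex a b hab x = ⟨x, hx⟩ := dif_neg hx

theorem mergeVertex_self (hab : a ≠ b) : mergeVertex a b hab b = ⟨a, hab⟩ := dif_pos rfl

theorem mergedLE_mergeVertex_iff (hab : a ≠ b) {x y : G.V} :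
    MergedLE a b (mergeVertex a b hab x).1 (mergeVertex a b hab y).1 ↔ MergedLE a b x y := by
  have hequiv (z : G.V) :
      MergedLE a b (mergeVertex a b hab z).1 z ∧ MergedLE a b z (mergeVertex a b hab z).1 := by
    by_cases hz : z = b
    · subst hz
      rw [mergeVertex_self]
      exact ⟨Or.inr (Or.inl ⟨le_rfl, le_rfl⟩), Or.inr (Or.inr ⟨le_rfl, le_rfl⟩)⟩
    · rw [mergeVertex_of_ne hab hz]
      exact ⟨mergedLE_refl z, mergedLE_refl z⟩
  exact ⟨fun h => mergedLE_trans (mergedLE_trans (hequiv x).2 h) (hequiv y).1,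
    fun h => mergedLE_trans (mergedLE_trans (hequiv x).1 h) (hequiv y).2⟩

theorem not_mergedLE_of_hom (hab : ¬ a ≤ b) (hba : ¬ b ≤ a) {x y : G.V} (f : x ⟶ y) :
    ¬ MergedLE a b y x := by
  have hxy := lt_of_hom f
  rintro (hyx | ⟨hya, hbx⟩ | ⟨hyb, hax⟩)
  · exact not_le_of_gt hxy hyx
  · exact hba (hbx.trans (hxy.le.trans hya))
  · exact hab (hax.trans (hxy.le.trans hyb))

noncomputable def mergedNet (hab : ¬ a ≤ b) (hba : ¬ b ≤ a) : CausalNet where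
  V := {x : G.V // x ≠ b}
  E := G.E
  src e := mergeVertex a b (ne_of_not_le hab) (G.src e)
  tgt e := mergeVertex a b (ne_of_not_le hab) (G.tgt e)
  fintypeV := Fintype.ofFinite _
  fintypeE := inferInstance
  acyclic := @noCycleData_of_lt _ _
    { le u v := MergedLE a b u.1 v.1
      lt u v := MergedLE a b u.1 v.1 ∧ ¬ MergedLE a b v.1 u.1
      le_refl u := mergedLE_refl u.1
      le_trans _ _ _ := mergedLE_trans } _ _ fun e =>
    ⟨(mergedLE_mergeVertex_iff _).2 (Or.inl (lt_of_hom (edgeHom G e)).le),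
      fun h => not_mergedLE_of_hom hab hba (edgeHom G e) ((mergedLE_mergeVertex_iff _).1 h)⟩

noncomputable def mergeHom (hab : ¬ a ≤ b) (hba : ¬ b ≤ a) : G.V ⥤q (mergedNet hab hba).V where
  obj := mergeVertex a b (ne_of_not_le hab)
  map f := ⟨f.1, congrArg (mergeVertex a b _) f.2.1, congrArg (mergeVertex a b _) f.2.2⟩

theorem exists_fusion_identifying (hab : ¬ a ≤ b) (hba : ¬ b ≤ a) :
    ∃ (H : CausalNet) (φ : G ⟶ H), IsFusion φ ∧ vmap φ a = vmap φ b := by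
  refine ⟨mergedNet hab hba, Cat.freeMap (mergeHom hab hba),
    (isFusion_freeMap_iff _).2 ⟨fun v => ⟨v.1, mergeVertex_of_ne _ v.2⟩, fun e => ⟨e, rfl⟩⟩, ?_⟩
  exact (mergeVertex_of_ne _ (ne_of_not_le hab)).trans (mergeVertex_self _).symm

end Merge

theorem injective_vmap_of_isIso (φ : G ⟶ H) [IsIso φ] : Function.Injective (vmap φ) :=
  Function.LeftInverse.injective (g := (inv φ : Paths H.V ⥤ Paths G.V).obj)
    (Functor.congr_obj (IsIso.hom_inv_id φ))

theorem Harmonic.le_total (hG : Harmonic G) (a b : G.V) : a ≤ b ∨ b ≤ a := by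
  by_contra! h
  obtain ⟨H, φ, hφ, hab⟩ := exists_fusion_identifying h.1 h.2
  have := hG H φ hφ
  exact ne_of_not_le h.1 (injective_vmap_of_isIso φ hab)

theorem hasHamiltonianPath_of_le_total [Nonempty G.V] (htot : ∀ a b : G.V, a ≤ b ∨ b ≤ a) :
    HasHamiltonianPath G := by
  classical
  let _ : LinearOrder G.V :=
    { (inferInstance : PartialOrder G.V) with le_total := htot, toDecidableLE := inferInstance }
  obtain ⟨n, hn⟩ := Nat.exists_eq_succ_of_ne_zero (Fintype.card_ne_zero (α := G.V))
  let σ := monoEquivOfFin G.V hn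
  have hchain : (List.ofFn σ).IsChain fun u v => Nonempty (u ⟶ v) :=
    List.isChain_ofFn.2 fun i hi =>
      nonempty_hom_of_covBy ((apply_covBy_apply_iff σ).2 (by simp [Fin.covBy_iff]))
  rw [List.ofFn_succ] at hchain
  obtain ⟨c, p, hp⟩ := Quiver.Path.exists_vertices_eq_of_isChain _ _ hchain
  rw [← List.ofFn_succ] at hp
  refine ⟨_, c, p, ?_, fun v => ?_⟩ <;> rw [pathVertices_eq_vertices, hp]
  · exact List.nodup_ofFn.2 σ.injective
  · exact List.mem_ofFn.2 (σ.surjective v)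

theorem harmonic_iff_hamiltonian (G : CausalNet) (h1 : IsSimpleNet G)
    (h2 : Nonempty G.V) : Harmonic G ↔ HasHamiltonianPath G :=
  ⟨fun hG => hasHamiltonianPath_of_le_total hG.le_total, harmonic_of_hasHamiltonianPath h1⟩

end CausalNets
end
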